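/- Every compact uniquely remotal subset of a normed linear space is a singleton. -/

import Mathlib

/-- Farthest distance from `x` to a set `M`. -/
noncomputable def fdist {X : Type*} [NormedAddCommGroup X] (x : X) (M : Set X) : ℝ :=
  sSup ((fun m => ‖x - m‖) '' M)

/-!
Suppose `M` has two points `a ≠ b`, so that `fdist x M ≥ ‖a - b‖ / 2 =: ε` for every `x`. Cover `M`
by finitely many `ε`-balls with centres `S` and let `c` minimise the continuous function
`fdist · M` on the compact set `convexHull ℝ S`. The unique farthest point `u` of `M` from `c`
lies within `ε` of some `v ∈ S`. Points of `M` away from `u` are at distance at most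
`fdist c M - η` from `c` by compactness and uniqueness, and points near `u` are closer than
`fdist c M` to `v`; hence moving `c` a little towards `v` decreases `fdist · M` inside
`convexHull ℝ S`, a contradiction.
-/

open Set Bornology Metric

section

variable {X : Type*} [NormedAddCommGroup X] {M : Set X}

/-- The set `F(x, M)` of farthest points of `M` from `x`. -/
def farthestPoints (x : X) (M : Set X) : Set X :=
  {p ∈ M | ‖x - p‖ = fdist x M}

lemma mem_of_farthestPoints_eq_singleton {x u : X} (h : farthestPoints x M = {u}) : u ∈ M :=
  (h.symm ▸ mem_singleton u : u ∈ farthestPoints x M).1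

lemma Bornology.IsBounded.bddAbove_norm_sub_image (hM : IsBounded M) (x : X) :
    BddAbove ((fun m => ‖x - m‖) '' M) := by
  obtain ⟨r, hr⟩ := hM.subset_closedBall x
  refine ⟨r, ?_⟩
  rintro _ ⟨m, hm, rfl⟩
  simpa [dist_comm, dist_eq_norm] using hr hm

lemma norm_sub_le_fdist (hM : IsBounded M) (x : X) {p : X} (hp : p ∈ M) :
    ‖x - p‖ ≤ fdist x M :=
  le_csSup (hM.bddAbove_norm_sub_image x) (mem_image_of_mem _ hp)

lemma norm_sub_le_two_mul_fdist (hM : IsBounded M) (x : X) {a b : X} (ha : a ∈ M) (hb : b ∈ M) :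
    ‖a - b‖ ≤ 2 * fdist x M :=
  calc ‖a - b‖ ≤ ‖x - a‖ + ‖x - b‖ := by
        rw [norm_sub_rev x a]; exact norm_sub_le_norm_sub_add_norm_sub a x b
    _ ≤ 2 * fdist x M := by
      linarith [norm_sub_le_fdist hM x ha, norm_sub_le_fdist hM x hb]

lemma fdist_le_fdist_add_dist (hM : IsBounded M) (hne : M.Nonempty) (x y : X) :
    fdist x M ≤ fdist y M + dist x y := by
  refine csSup_le (hne.image _) ?_
  rintro _ ⟨p, hp, rfl⟩
  calc ‖x - p‖ ≤ ‖x - y‖ + ‖y - p‖ := norm_sub_le_norm_sub_add_norm_sub x y p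
    _ ≤ fdist y M + dist x y := by
      rw [dist_eq_norm]; linarith [norm_sub_le_fdist hM y hp]

lemma lipschitzWith_fdist (hM : IsBounded M) (hne : M.Nonempty) :
    LipschitzWith 1 (fun x => fdist x M) :=
  LipschitzWith.of_le_add (fdist_le_fdist_add_dist hM hne)

lemma IsCompact.fdist_lt_iff (hM : IsCompact M) (hne : M.Nonempty) (x : X) (R : ℝ) :
    fdist x M < R ↔ ∀ p ∈ M, ‖x - p‖ < R :=
  hM.sSup_lt_iff_of_continuous hne (by fun_prop) R

lemma IsCompact.exists_pos_forall_far_norm_sub_add_le (hM : IsCompact M) {c u : X}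
    (hfar : farthestPoints c M = {u}) {ρ : ℝ} (hρ : 0 < ρ) :
    ∃ η > 0, ∀ p ∈ M, ρ ≤ dist p u → ‖c - p‖ + η ≤ fdist c M := by
  have hfarM : IsCompact {p ∈ M | ρ ≤ dist p u} :=
    hM.inter_right (isClosed_le continuous_const (continuous_id.dist continuous_const))
  have hgap : ∀ p ∈ {p ∈ M | ρ ≤ dist p u}, 0 < fdist c M - ‖c - p‖ := by
    rintro p ⟨hp, hρp⟩
    refine sub_pos.2 ((norm_sub_le_fdist hM.isBounded c hp).lt_of_ne fun h => ?_)
    have hpu : p = u := by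
      rw [← mem_singleton_iff, ← hfar]; exact ⟨hp, h⟩
    rw [hpu, dist_self] at hρp
    exact hρp.not_gt hρ
  obtain ⟨η, hη, hηle⟩ := hfarM.exists_forall_le' (by fun_prop) hgap
  exact ⟨η, hη, fun p hp hρp => by linarith [hηle p ⟨hp, hρp⟩]⟩

lemma IsCompact.exists_mem_segment_fdist_lt [NormedSpace ℝ X] (hM : IsCompact M) {c u v : X}
    (hfar : farthestPoints c M = {u}) (hv : ‖v - u‖ < fdist c M) :
    ∃ w ∈ segment ℝ c v, fdist w M < fdist c M := by
  set R := fdist c M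
  set ρ := (R - ‖v - u‖) / 2 with hρ
  obtain ⟨η, hη, hfarle⟩ := hM.exists_pos_forall_far_norm_sub_add_le hfar (by positivity : 0 < ρ)
  obtain ⟨t, ht, htη⟩ := exists_pos_mul_lt hη ‖v - c‖
  set τ := min t 1
  have hτ : 0 < τ := lt_min ht one_pos
  have hτ₁ : 0 ≤ 1 - τ := sub_nonneg.2 (min_le_right t 1)
  have hτη : ‖v - c‖ * τ < η :=
    (mul_le_mul_of_nonneg_left (min_le_left t 1) (norm_nonneg _)).trans_lt htη
  refine ⟨(1 - τ) • c + τ • v, ⟨1 - τ, τ, hτ₁, hτ.le, sub_add_cancel 1 τ, rfl⟩, ?_⟩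
  refine (hM.fdist_lt_iff ⟨u, mem_of_farthestPoints_eq_singleton hfar⟩ _ R).2 fun p hp => ?_
  rcases le_or_gt ρ (dist p u) with hpfar | hpnear
  · calc ‖(1 - τ) • c + τ • v - p‖ = ‖(c - p) + τ • (v - c)‖ := by congr 1; module
      _ ≤ ‖c - p‖ + ‖v - c‖ * τ := by
        refine (norm_add_le _ _).trans_eq ?_
        rw [norm_smul, Real.norm_of_nonneg hτ.le, mul_comm]
      _ < R := by linarith [hfarle p hp hpfar]
  · have hvp : ‖v - p‖ < R := by
      calc ‖v - p‖ ≤ ‖v - u‖ + ‖u - p‖ := norm_sub_le_norm_sub_add_norm_sub v u p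
        _ < R := by rw [← dist_eq_norm u p, dist_comm u p]; linarith
    calc ‖(1 - τ) • c + τ • v - p‖ = ‖(1 - τ) • (c - p) + τ • (v - p)‖ := by congr 1; module
      _ ≤ (1 - τ) * ‖c - p‖ + τ * ‖v - p‖ := by
        refine (norm_add_le _ _).trans_eq ?_
        rw [norm_smul, norm_smul, Real.norm_of_nonneg hτ₁, Real.norm_of_nonneg hτ.le]
      _ < R := by
        linarith [mul_le_mul_of_nonneg_left (norm_sub_le_fdist hM.isBounded c hp) hτ₁,
          mul_lt_mul_of_pos_left hvp hτ]

end

theorem compact_uniquely_remotal_singleton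
    {X : Type*} [NormedAddCommGroup X] [NormedSpace ℝ X]
    (M : Set X) (hM : M.Nonempty) (hcomp : IsCompact M)
    (hur : ∀ x : X, ∃ m, {p ∈ M | ‖x - p‖ = fdist x M} = {m}) :
    ∃ m : X, M = {m} := by
  obtain ⟨m, hm⟩ | ⟨a, ha, b, hb, hab⟩ := hM.exists_eq_singleton_or_nontrivial
  · exact ⟨m, hm⟩
  exfalso
  have hε : 0 < ‖a - b‖ / 2 := by simpa [sub_eq_zero] using hab
  obtain ⟨S, -, hSfin, hcover⟩ := hcomp.finite_cover_balls hε
  have hSne : S.Nonempty := by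
    obtain ⟨v, hv, -⟩ := mem_iUnion₂.1 (hcover ha)
    exact ⟨v, hv⟩
  obtain ⟨c, hc, hcmin⟩ := (hSfin.isCompact_convexHull ℝ).exists_isMinOn hSne.convexHull
    (lipschitzWith_fdist hcomp.isBounded hM).continuous.continuousOn
  obtain ⟨u, hu⟩ := hur c
  obtain ⟨v, hvS, huv⟩ := mem_iUnion₂.1 (hcover (mem_of_farthestPoints_eq_singleton hu))
  have hvu : ‖v - u‖ < fdist c M := by
    rw [mem_ball, dist_eq_norm, ← norm_neg, neg_sub] at huv
    linarith [norm_sub_le_two_mul_fdist hcomp.isBounded c ha hb]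
  obtain ⟨w, hw, hlt⟩ := hcomp.exists_mem_segment_fdist_lt hu hvu
  exact (hcmin ((convex_convexHull ℝ S).segment_subset hc (subset_convexHull ℝ S hvS) hw)).not_gt hlt
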